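/- There exists r₀ > 0 such that for all r with 0 ≤ r ≤ r₀ and all β ≥ 0, the function F(β) = ∫₀^β (r² + 2 sin² y)^{1/2} (3/4 − sin² y) dy is nonnegative; moreover if r > 0 then F(β) = 0 if and only if β = 0. -/

import Mathlib

/-!
The integrand `f r y = √(r² + 2 sin² y) (cos² y - 1/4)` is `π`-periodic, nonnegative on `[0, π/3]`
and `[2π/3, π]` and nonpositive in between, so on one period it suffices to show
`∫₀^{2π/3} f r ≥ 0`. Split `√(r² + 2 sin² y) = √2 sin y + φ(√2 sin y)` with
`φ x = √(r² + x²) - x` antitone on `[0, ∞)`. Since `cos² y - 1/4` changes sign exactly where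
`√2 sin y` crosses `√(3/2)`, replacing `φ(√2 sin y)` by the constant `φ(√(3/2))` only lowers the
integrand; the `√2 sin y` part integrates to `0` over `[0, 2π/3]`, and the constant part to
`φ(√(3/2)) (π/6 - √3/8)`, which is positive as soon as `r > 0`.
-/

open Real intervalIntegral Set
open MeasureTheory (volume)

namespace Function.Periodic

variable {g : ℝ → ℝ} {T : ℝ}

theorem intervalIntegral_nonneg (hg : Periodic g T) (hT : 0 < T)
    (hint : IntervalIntegrable g volume 0 T) (h : ∀ t ∈ Icc 0 T, 0 ≤ ∫ x in 0..t, g x)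
    {t : ℝ} (ht : 0 ≤ t) : 0 ≤ ∫ x in 0..t, g x := by
  have hinf : 0 ≤ sInf ((fun t => ∫ x in 0..t, g x) '' Icc 0 T) :=
    Real.sInf_nonneg (by rintro _ ⟨s, hs, rfl⟩; exact h s hs)
  have hfloor : 0 ≤ ⌊t / T⌋ := Int.floor_nonneg.mpr (div_nonneg ht hT.le)
  have hperiod : 0 ≤ ⌊t / T⌋ • ∫ x in 0..T, g x :=
    zsmul_nonneg (h T ⟨hT.le, le_rfl⟩) hfloor
  linarith [hg.sInf_add_zsmul_le_integral_of_pos hint hT t]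

theorem intervalIntegral_pos (hg : Periodic g T) (hT : 0 < T)
    (hint : ∀ a b, IntervalIntegrable g volume a b) (h : ∀ t ∈ Icc 0 T, 0 ≤ ∫ x in 0..t, g x)
    (hpos : ∀ t ∈ Ioc 0 T, 0 < ∫ x in 0..t, g x) {t : ℝ} (ht : 0 < t) :
    0 < ∫ x in 0..t, g x := by
  rcases le_or_gt t T with htT | hTt
  · exact hpos t ⟨ht, htT⟩
  · have hsplit := hg.intervalIntegral_add_eq_add 0 (t - T) hint
    rw [sub_add_cancel, zero_add] at hsplit
    rw [hsplit]
    linarith [hg.intervalIntegral_nonneg hT (hint 0 T) h (sub_nonneg.2 hTt.le),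
      hpos T ⟨hT, le_rfl⟩]

end Function.Periodic

theorem antitoneOn_sqrt_sq_add_sq_sub (r : ℝ) :
    AntitoneOn (fun x => √(r ^ 2 + x ^ 2) - x) (Ici 0) := by
  intro x hx y _ hxy
  have hx_le : x ≤ √(r ^ 2 + x ^ 2) := Real.le_sqrt_of_sq_le (by nlinarith)
  have hsq : r ^ 2 + y ^ 2 ≤ (√(r ^ 2 + x ^ 2) + (y - x)) ^ 2 := by
    have := Real.sq_sqrt (show 0 ≤ r ^ 2 + x ^ 2 by positivity)
    nlinarith
  have := Real.sqrt_le_sqrt hsq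
  rw [Real.sqrt_sq (by linarith [sqrt_nonneg (r ^ 2 + x ^ 2)])] at this
  show √(r ^ 2 + y ^ 2) - y ≤ √(r ^ 2 + x ^ 2) - x
  linarith

theorem cos_two_pi_div_three : cos (2 * π / 3) = -(1 / 2) := by
  rw [show 2 * π / 3 = π - π / 3 by ring, cos_pi_sub, cos_pi_div_three]

theorem sin_two_pi_div_three : sin (2 * π / 3) = √3 / 2 := by
  rw [show 2 * π / 3 = π - π / 3 by ring, sin_pi_sub, sin_pi_div_three]

theorem three_quarters_sub_sin_sq (y : ℝ) : 3 / 4 - sin y ^ 2 = cos y ^ 2 - 1 / 4 := by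
  linarith [sin_sq_add_cos_sq y]

theorem half_le_cos {y : ℝ} (hy : y ∈ Icc 0 (π / 3)) : 1 / 2 ≤ cos y := by
  rw [← cos_pi_div_three]
  exact cos_le_cos_of_nonneg_of_le_pi hy.1 (by linarith [pi_pos]) hy.2

theorem cos_le_neg_half {y : ℝ} (hy : y ∈ Icc (2 * π / 3) π) : cos y ≤ -(1 / 2) := by
  rw [← cos_two_pi_div_three]
  exact cos_le_cos_of_nonneg_of_le_pi (by linarith [pi_pos]) hy.2 hy.1

theorem cos_sq_le_quarter {y : ℝ} (hy : y ∈ Icc (π / 3) (2 * π / 3)) : cos y ^ 2 ≤ 1 / 4 := by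
  have hupper : cos y ≤ 1 / 2 := by
    rw [← cos_pi_div_three]
    exact cos_le_cos_of_nonneg_of_le_pi (by linarith [pi_pos]) (by linarith [hy.2, pi_pos]) hy.1
  have hlower : -(1 / 2) ≤ cos y := by
    rw [← cos_two_pi_div_three]
    exact cos_le_cos_of_nonneg_of_le_pi (by linarith [hy.1, pi_pos]) (by linarith [pi_pos]) hy.2
  nlinarith

theorem quarter_lt_cos_sq {y : ℝ} (hy : y ∈ Ioo 0 (π / 3)) : 1 / 4 < cos y ^ 2 := by
  have : 1 / 2 < cos y := by
    rw [← cos_pi_div_three]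
    exact cos_lt_cos_of_nonneg_of_le_pi hy.1.le (by linarith [pi_pos]) hy.2
  nlinarith

namespace Skyrme

noncomputable def integrand (r y : ℝ) : ℝ := √(r ^ 2 + 2 * sin y ^ 2) * (3 / 4 - sin y ^ 2)

theorem continuous_integrand (r : ℝ) : Continuous (integrand r) := by
  unfold integrand; fun_prop

theorem intervalIntegrable_integrand (r a b : ℝ) : IntervalIntegrable (integrand r) volume a b :=
  (continuous_integrand r).intervalIntegrable a b

theorem periodic_integrand (r : ℝ) : Function.Periodic (integrand r) π := by
  intro y; simp only [integrand, sin_add_pi, neg_sq]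

theorem integrand_nonneg {r y : ℝ} (h : 1 / 4 ≤ cos y ^ 2) : 0 ≤ integrand r y :=
  mul_nonneg (sqrt_nonneg _) (by rw [three_quarters_sub_sin_sq]; linarith)

theorem integrand_nonpos {r y : ℝ} (h : cos y ^ 2 ≤ 1 / 4) : integrand r y ≤ 0 :=
  mul_nonpos_of_nonneg_of_nonpos (sqrt_nonneg _) (by rw [three_quarters_sub_sin_sq]; linarith)

theorem integrand_pos {r y : ℝ} (h : 1 / 4 < cos y ^ 2) (hs : sin y ≠ 0) : 0 < integrand r y := by
  have hsq : 0 < sin y ^ 2 := by positivity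
  exact mul_pos (sqrt_pos.2 (by positivity)) (by rw [three_quarters_sub_sin_sq]; linarith)

noncomputable def gap (r : ℝ) : ℝ := √(r ^ 2 + 3 / 2) - √(3 / 2)

theorem gap_nonneg (r : ℝ) : 0 ≤ gap r :=
  sub_nonneg.2 (sqrt_le_sqrt (by nlinarith))

theorem gap_pos {r : ℝ} (hr : 0 < r) : 0 < gap r :=
  sub_pos.2 (sqrt_lt_sqrt (by norm_num) (by nlinarith))

theorem le_integrand_of_sin_nonneg {r y : ℝ} (hy : 0 ≤ sin y) :
    √2 * (sin y * (3 / 4 - sin y ^ 2)) + gap r * (3 / 4 - sin y ^ 2) ≤ integrand r y := by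
  set x := √2 * sin y
  set a := √(3 / 2)
  have hx : 0 ≤ x := by positivity
  have hx2 : x ^ 2 = 2 * sin y ^ 2 := by rw [mul_pow, sq_sqrt zero_le_two]
  have ha2 : a ^ 2 = 3 / 2 := sq_sqrt (by norm_num)
  have hφ := antitoneOn_sqrt_sq_add_sq_sub r
  have hsign : 0 ≤ ((√(r ^ 2 + x ^ 2) - x) - (√(r ^ 2 + a ^ 2) - a)) * (a ^ 2 - x ^ 2) := by
    rcases le_total x a with hxa | hax
    · exact mul_nonneg (sub_nonneg.2 (hφ hx (sqrt_nonneg _) hxa))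
        (sub_nonneg.2 (pow_le_pow_left₀ hx hxa 2))
    · exact mul_nonneg_of_nonpos_of_nonpos (sub_nonpos.2 (hφ (sqrt_nonneg _) hx hax))
        (sub_nonpos.2 (pow_le_pow_left₀ (sqrt_nonneg _) hax 2))
  rw [hx2, ha2] at hsign
  unfold integrand gap
  nlinarith

theorem integral_sin_mul_three_quarters_sub_sin_sq :
    ∫ y in 0..2 * π / 3, sin y * (3 / 4 - sin y ^ 2) = 0 := by
  have hcube : ∀ y, sin y * (3 / 4 - sin y ^ 2) = 3 / 4 * sin y - sin y ^ 3 := fun y => by ring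
  simp only [hcube]
  rw [integral_sub (Continuous.intervalIntegrable (by fun_prop) _ _)
    (Continuous.intervalIntegrable (by fun_prop) _ _), integral_const_mul, integral_sin,
    integral_sin_pow_three, cos_two_pi_div_three, cos_zero]
  norm_num

theorem integral_three_quarters_sub_sin_sq :
    ∫ y in 0..2 * π / 3, (3 / 4 - sin y ^ 2) = π / 6 - √3 / 8 := by
  rw [integral_sub (Continuous.intervalIntegrable (by fun_prop) _ _)
    (Continuous.intervalIntegrable (by fun_prop) _ _), integral_const, integral_sin_sq,
    cos_two_pi_div_three, sin_two_pi_div_three, sin_zero]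
  simp only [smul_eq_mul]
  ring

theorem pi_div_six_sub_sqrt_three_div_eight_pos : 0 < π / 6 - √3 / 8 := by
  have : √3 < 2 := by rw [sqrt_lt' two_pos]; norm_num
  linarith [pi_gt_three]

theorem gap_mul_le_integral (r : ℝ) :
    gap r * (π / 6 - √3 / 8) ≤ ∫ y in 0..2 * π / 3, integrand r y := by
  have hlower : ∀ y ∈ Icc 0 (2 * π / 3),
      √2 * (sin y * (3 / 4 - sin y ^ 2)) + gap r * (3 / 4 - sin y ^ 2) ≤ integrand r y :=
    fun y hy => le_integrand_of_sin_nonneg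
      (sin_nonneg_of_nonneg_of_le_pi hy.1 (by linarith [hy.2, pi_pos]))
  have hmono := integral_mono_on (by positivity) (Continuous.intervalIntegrable (by fun_prop) _ _)
    (intervalIntegrable_integrand r _ _) hlower
  rwa [integral_add (Continuous.intervalIntegrable (by fun_prop) _ _)
      (Continuous.intervalIntegrable (by fun_prop) _ _),
    integral_const_mul, integral_const_mul, integral_sin_mul_three_quarters_sub_sin_sq,
    integral_three_quarters_sub_sin_sq, mul_zero, zero_add] at hmono

theorem integral_two_pi_div_three_le (r : ℝ) {t : ℝ} (ht : t ∈ Icc (π / 3) π) :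
    ∫ y in 0..2 * π / 3, integrand r y ≤ ∫ y in 0..t, integrand r y := by
  rw [← integral_add_adjacent_intervals (intervalIntegrable_integrand r 0 (2 * π / 3))
    (intervalIntegrable_integrand r _ t)]
  rcases le_total t (2 * π / 3) with htle | hlet
  · have hneg : 0 ≤ ∫ y in t..2 * π / 3, -integrand r y := integral_nonneg htle fun y hy =>
      neg_nonneg.2 (integrand_nonpos (cos_sq_le_quarter ⟨ht.1.trans hy.1, hy.2⟩))
    rw [integral_neg, integral_symm] at hneg
    linarith
  · have hnonneg : 0 ≤ ∫ y in 2 * π / 3..t, integrand r y := integral_nonneg hlet fun y hy => by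
      have := cos_le_neg_half ⟨hy.1, hy.2.trans ht.2⟩
      exact integrand_nonneg (by nlinarith)
    linarith

theorem integral_integrand_nonneg_of_mem_Icc (r : ℝ) {t : ℝ} (ht : t ∈ Icc 0 π) :
    0 ≤ ∫ y in 0..t, integrand r y := by
  rcases le_total t (π / 3) with htle | hlet
  · refine integral_nonneg ht.1 fun y hy => ?_
    have := half_le_cos ⟨hy.1, hy.2.trans htle⟩
    exact integrand_nonneg (by nlinarith)
  · calc (0 : ℝ) ≤ gap r * (π / 6 - √3 / 8) :=
          mul_nonneg (gap_nonneg r) pi_div_six_sub_sqrt_three_div_eight_pos.le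
      _ ≤ _ := gap_mul_le_integral r
      _ ≤ _ := integral_two_pi_div_three_le r ⟨hlet, ht.2⟩

theorem integral_integrand_pos_of_mem_Ioc {r : ℝ} (hr : 0 < r) {t : ℝ} (ht : t ∈ Ioc 0 π) :
    0 < ∫ y in 0..t, integrand r y := by
  rcases le_total t (π / 3) with htle | hlet
  · refine intervalIntegral_pos_of_pos_on (intervalIntegrable_integrand r 0 t) (fun y hy => ?_)
      ht.1
    have hy' : y ∈ Ioo 0 (π / 3) := ⟨hy.1, hy.2.trans_le htle⟩
    exact integrand_pos (quarter_lt_cos_sq hy')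
      (sin_pos_of_pos_of_lt_pi hy.1 (by linarith [hy'.2, pi_pos])).ne'
  · calc (0 : ℝ) < gap r * (π / 6 - √3 / 8) :=
          mul_pos (gap_pos hr) pi_div_six_sub_sqrt_three_div_eight_pos
      _ ≤ _ := gap_mul_le_integral r
      _ ≤ _ := integral_two_pi_div_three_le r ⟨hlet, ht.2⟩

theorem integral_integrand_nonneg (r : ℝ) {β : ℝ} (hβ : 0 ≤ β) :
    0 ≤ ∫ y in 0..β, integrand r y :=
  (periodic_integrand r).intervalIntegral_nonneg pi_pos (intervalIntegrable_integrand r 0 π)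
    (fun _ ht => integral_integrand_nonneg_of_mem_Icc r ht) hβ

theorem integral_integrand_pos {r : ℝ} (hr : 0 < r) {β : ℝ} (hβ : 0 < β) :
    0 < ∫ y in 0..β, integrand r y :=
  (periodic_integrand r).intervalIntegral_pos pi_pos (intervalIntegrable_integrand r)
    (fun _ ht => integral_integrand_nonneg_of_mem_Icc r ht)
    (fun _ ht => integral_integrand_pos_of_mem_Ioc hr ht) hβ

end Skyrme

open Skyrme

theorem skyrme_stmt1 :
    ∃ r₀ > (0:ℝ), ∀ r : ℝ, 0 ≤ r → r ≤ r₀ →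
      (∀ β : ℝ, 0 ≤ β →
        0 ≤ ∫ y in (0:ℝ)..β, Real.sqrt (r ^ 2 + 2 * Real.sin y ^ 2) * (3/4 - Real.sin y ^ 2)) ∧
      (0 < r → ∀ β : ℝ, 0 ≤ β →
        ((∫ y in (0:ℝ)..β, Real.sqrt (r ^ 2 + 2 * Real.sin y ^ 2) * (3/4 - Real.sin y ^ 2)) = 0
          ↔ β = 0)) := by
  refine ⟨1, one_pos, fun r _ _ => ⟨fun β hβ => integral_integrand_nonneg r hβ, fun hr β hβ => ?_⟩⟩
  refine ⟨fun hzero => ?_, by rintro rfl; exact integral_same⟩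
  by_contra hβ0
  exact (integral_integrand_pos hr (hβ.lt_of_ne' hβ0)).ne' hzero
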